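/- Let ι be a finite index type and for each j ∈ ι let α j be a finite type with decidable equality. For each j let S_j ⊆ α j be a nonempty finite subset. Then: (1) the function Ψ : (∀ j, α j) → ℂ given by Ψ x = ∏ j, u_{S_j} (x j) equals the uniform superposition u_P over the product set P := {x | ∀ j, x j ∈ S_j} (Fintype.piFinset S); and (2) for every nonempty finite A ⊆ P, ⟪Ψ, u_A⟫ = Real.sqrt ( |A| / ∏ j, |S_j| ). In particular, the state ⊗_j u_{S_j} prepared by the local searches of DEGGA has overlap sin θ_{f'} = √(a / ∏_j a_j) with the global target superposition u_A. -/

import Mathlib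

open scoped InnerProductSpace

/-- The uniform superposition over a finite subset `S` of `X`:
`u_S x = 1/√|S|` if `x ∈ S` and `0` otherwise. -/
noncomputable def unif {X : Type*} [Fintype X] [DecidableEq X] (S : Finset X) :
    EuclideanSpace ℂ X :=
  WithLp.toLp 2 (fun x => if x ∈ S then ((1 / Real.sqrt S.card : ℝ) : ℂ) else 0)

private lemma sqrt_prod' {ι : Type*} (s : Finset ι) (f : ι → ℝ) (h : ∀ i ∈ s, 0 ≤ f i) :
    Real.sqrt (∏ i ∈ s, f i) = ∏ i ∈ s, Real.sqrt (f i) := by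
  classical
  induction s using Finset.induction with
  | empty => simp
  | @insert a s hx ih =>
    rw [Finset.prod_insert hx, Finset.prod_insert hx,
      Real.sqrt_mul (h a (Finset.mem_insert_self a s)),
      ih (fun i hi => h i (Finset.mem_insert_of_mem hi))]

/-- The tensor product `Ψ = ⊗_j u_{S_j}` of the local uniform superpositions equals the
uniform superposition over the product set `Π_j S_j`, and its overlap with the uniform
superposition over any nonempty `A ⊆ Π_j S_j` is `√(|A| / ∏_j |S_j|)`. -/
theorem tensor_unif_and_overlap
    {ι : Type*} [Fintype ι] [DecidableEq ι]
    {α : ι → Type*} [∀ j, Fintype (α j)] [∀ j, DecidableEq (α j)]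
    (S : ∀ j, Finset (α j)) (hS : ∀ j, (S j).Nonempty)
    (Ψ : EuclideanSpace ℂ (∀ j, α j))
    (hΨ : ∀ x : ∀ j, α j, Ψ x = ∏ j, unif (S j) (x j)) :
    Ψ = unif (Fintype.piFinset S) ∧
      ∀ A : Finset (∀ j, α j), A.Nonempty → A ⊆ Fintype.piFinset S →
        ⟪Ψ, unif A⟫_ℂ =
          ((Real.sqrt ((A.card : ℝ) / ∏ j, ((S j).card : ℝ)) : ℝ) : ℂ) := by
  have hPcard : ((Fintype.piFinset S).card : ℝ) = ∏ j, ((S j).card : ℝ) := by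
    rw [Fintype.card_piFinset]; push_cast; ring
  have hPpos : (0 : ℝ) < (Fintype.piFinset S).card := by
    have : (Fintype.piFinset S).Nonempty := by
      rw [Fintype.piFinset_nonempty]; exact hS
    exact_mod_cast this.card_pos
  have hmain : Ψ = unif (Fintype.piFinset S) := by
    ext x
    rw [hΨ, unif, PiLp.toLp_apply]
    by_cases hx : x ∈ Fintype.piFinset S
    · simp only [hx, if_true]
      rw [Fintype.mem_piFinset] at hx
      have : ∀ j, unif (S j) (x j) = ((1 / Real.sqrt (S j).card : ℝ) : ℂ) := fun j => by
        simp [unif, hx j]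
      rw [Finset.prod_congr rfl (fun j _ => this j)]
      rw [← Complex.ofReal_prod]
      congr 1
      rw [hPcard, sqrt_prod' _ _ (fun j _ => by positivity)]
      simp [Finset.prod_div_distrib]
    · simp only [hx, if_false]
      rw [Fintype.mem_piFinset] at hx
      push_neg at hx
      obtain ⟨j, hj⟩ := hx
      exact Finset.prod_eq_zero (Finset.mem_univ j) (by simp [unif, hj])
  refine ⟨hmain, fun A hA hAP => ?_⟩
  rw [hmain]
  rw [PiLp.inner_apply]
  have : ∀ x, (inner ℂ (unif (Fintype.piFinset S) x) (unif A x) : ℂ) =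
      if x ∈ A then (((1 / Real.sqrt (Fintype.piFinset S).card) *
        (1 / Real.sqrt A.card) : ℝ) : ℂ) else 0 := by
    intro x
    by_cases hx : x ∈ A
    · have hxP : x ∈ Fintype.piFinset S := hAP hx
      simp [unif, hx, Fintype.mem_piFinset.mp hxP, RCLike.inner_apply, Complex.ofReal_mul, Complex.conj_ofReal, mul_comm]
    · simp [unif, hx, RCLike.inner_apply]
  rw [Finset.sum_congr rfl (fun x _ => this x), Finset.sum_ite_mem,
    Finset.univ_inter, Finset.sum_const, nsmul_eq_mul]
  rw [← Complex.ofReal_natCast, ← Complex.ofReal_mul]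
  congr 1
  have hAc : (0 : ℝ) < A.card := by exact_mod_cast hA.card_pos
  have hsA : (0:ℝ) < Real.sqrt A.card := Real.sqrt_pos.mpr hAc
  have hsP : (0:ℝ) < Real.sqrt (Fintype.piFinset S).card := Real.sqrt_pos.mpr hPpos
  have hppos : (0:ℝ) < ∏ j, ((S j).card:ℝ) := hPcard ▸ hPpos
  have hsp : (0:ℝ) < Real.sqrt (∏ j, ((S j).card:ℝ)) := Real.sqrt_pos.mpr hppos
  rw [hPcard, Real.sqrt_div hAc.le, eq_div_iff hsp.ne']
  have hA2 : (A.card:ℝ) = Real.sqrt A.card * Real.sqrt A.card :=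
    (Real.mul_self_sqrt hAc.le).symm
  rw [hA2]
  rw [Real.sqrt_mul_self hsA.le]
  have key : ∀ s p : ℝ, 0 < s → 0 < p → s * s * (1 / p * (1 / s)) * p = s := by
    clear hA2 this
    intro s p hs hp
    field_simp
  exact key _ _ hsA hsp
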